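/- For all real x > 2, Li(x) < (1 + 4/log x)² · (x/log x). -/

import Mathlib

/-!
Write `F` for the right-hand side. For `x ≤ 16` we have `log x < 4`, so `(1 + 4 / log x)² > 4`
and `F x > x / log 2`, which already beats the trivial bound `Li x ≤ (x - 2) / log 2`.
For `t ≥ 16`, `F' t = 1 / log t + 7 / log² t - 48 / log⁴ t ≥ 1 / log t` because
`log² t ≥ log² 16 > 48 / 7`, so `F - Li` is nondecreasing on `[16, ∞)`.
-/

/-- The logarithmic integral `Li(x) := ∫₂ˣ dt / log t`. -/
noncomputable def Li (x : ℝ) : ℝ := ∫ t in (2:ℝ)..x, 1 / Real.log t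

open Real Set MeasureTheory intervalIntegral

noncomputable def liMajorant (t : ℝ) : ℝ := (1 + 4 / log t) ^ 2 * (t / log t)

lemma hasDerivAt_liMajorant {t : ℝ} (ht : 1 < t) :
    HasDerivAt liMajorant (1 / log t + 7 / log t ^ 2 - 48 / log t ^ 4) t := by
  have hlog_ne : log t ≠ 0 := (log_pos ht).ne'
  have ht0 : t ≠ 0 := by linarith
  have hlog : HasDerivAt log t⁻¹ t := hasDerivAt_log ht0
  have hinv : HasDerivAt (fun y => 1 + 4 / log y) ((0 * log t - 4 * t⁻¹) / log t ^ 2) t :=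
    ((hasDerivAt_const t (4 : ℝ)).div hlog hlog_ne).const_add 1
  have hquot : HasDerivAt (fun y => y / log y) ((1 * log t - t * t⁻¹) / log t ^ 2) t :=
    (hasDerivAt_id t).div hlog hlog_ne
  refine ((hinv.pow 2).mul hquot).congr_deriv ?_
  simp only [Pi.pow_apply, Nat.cast_ofNat, Nat.reduceSub, pow_one]
  field_simp
  ring

lemma forty_eight_div_log_pow_four_le {t : ℝ} (ht : 16 ≤ t) :
    48 / log t ^ 4 ≤ 7 / log t ^ 2 := by
  have hlog16 : (2.772 : ℝ) < log t := by
    have h16 : log 16 = 4 * log 2 := by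
      rw [show (16 : ℝ) = 2 ^ 4 by norm_num, log_pow]; norm_num
    linarith [log_two_gt_d9, log_le_log (by norm_num) ht]
  have hsq : (48 / 7 : ℝ) ≤ log t ^ 2 := by nlinarith
  rw [div_le_div_iff₀ (by positivity) (by positivity)]
  nlinarith [mul_le_mul_of_nonneg_right hsq (sq_nonneg (log t ^ 2))]

lemma intervalIntegrable_one_div_log {a b : ℝ} (ha : 1 < a) (hb : 1 < b) :
    IntervalIntegrable (fun t => 1 / log t) volume a b := by
  refine ContinuousOn.intervalIntegrable (continuousOn_of_forall_continuousAt fun t ht => ?_)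
  have ht : 1 < t := lt_of_lt_of_le (lt_min ha hb) ht.1
  exact continuousAt_const.div (continuousAt_log (by linarith)) (log_pos ht).ne'

lemma Li_le_sub_two_div_log_two {x : ℝ} (hx : 2 ≤ x) : Li x ≤ (x - 2) / log 2 := by
  have hmono : Li x ≤ ∫ _ in (2:ℝ)..x, 1 / log 2 :=
    integral_mono_on hx (intervalIntegrable_one_div_log one_lt_two (by linarith))
      intervalIntegrable_const fun t ht =>
        one_div_le_one_div_of_le (log_pos one_lt_two) (log_le_log two_pos ht.1)
  simpa [div_eq_mul_inv] using hmono

lemma Li_lt_liMajorant_of_le_sixteen {x : ℝ} (h2 : 2 < x) (h16 : x ≤ 16) :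
    Li x < liMajorant x := by
  have hlog2 : 0 < log 2 := log_pos one_lt_two
  have hL : 0 < log x := log_pos (by linarith)
  have hL16 : log x ≤ 4 * log 2 := by
    rw [← log_rpow two_pos]; exact log_le_log (by linarith) (by norm_num [h16])
  have hlog2_lt_one : log 2 < 1 := by linarith [log_two_lt_d9]
  have hfactor : 4 < (1 + 4 / log x) ^ 2 := by
    have : 1 < 4 / log x := by rw [lt_div_iff₀ hL]; linarith
    nlinarith
  calc Li x ≤ (x - 2) / log 2 := Li_le_sub_two_div_log_two h2.le
    _ < x / log 2 := by gcongr; linarith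
    _ = 4 * (x / (4 * log 2)) := by field_simp
    _ ≤ (1 + 4 / log x) ^ 2 * (x / log x) := by gcongr
    _ = liMajorant x := rfl

lemma Li_sub_Li_le_liMajorant_sub {a b : ℝ} (ha : 16 ≤ a) (hab : a ≤ b) :
    Li b - Li a ≤ liMajorant b - liMajorant a := by
  have hderiv : ∀ t ∈ Icc a b, HasDerivAt liMajorant
      (1 / log t + 7 / log t ^ 2 - 48 / log t ^ 4) t :=
    fun t ht => hasDerivAt_liMajorant (by linarith [ht.1])
  rw [Li, Li, integral_interval_sub_left
    (intervalIntegrable_one_div_log one_lt_two (by linarith))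
    (intervalIntegrable_one_div_log one_lt_two (by linarith))]
  refine integral_le_sub_of_hasDeriv_right_of_le hab
    (fun t ht => (hderiv t ht).continuousAt.continuousWithinAt)
    (fun t ht => (hderiv t (Ioo_subset_Icc_self ht)).hasDerivWithinAt)
    ((intervalIntegrable_iff_integrableOn_Icc_of_le hab).1
      (intervalIntegrable_one_div_log (by linarith) (by linarith)))
    fun t ht => ?_
  linarith [forty_eight_div_log_pow_four_le (t := t) (by linarith [ht.1])]

/-- For all real `x > 2`, `Li(x) < (1 + 4/log x)² · (x/log x)`. -/
theorem stmt13 (x : ℝ) (hx : 2 < x) :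
    Li x < (1 + 4 / Real.log x) ^ 2 * (x / Real.log x) := by
  show Li x < liMajorant x
  rcases le_or_gt x 16 with h16 | h16
  · exact Li_lt_liMajorant_of_le_sixteen hx h16
  · have hsmall := Li_lt_liMajorant_of_le_sixteen (by norm_num) le_rfl
    have hgrowth := Li_sub_Li_le_liMajorant_sub le_rfl h16.le
    linarith
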